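/- Let V be a valuation ring of finite Krull dimension n ≥ 1, let p ⊆ V be the unique prime ideal of height n−1, and let a ∈ m_V \ p. Then the a-adic completion V̂ᵃ = AdicCompletion (Ideal.span {a}) V is a Henselian local ring. -/

import Mathlib

/-!
Every prime containing `a` lies strictly above `p`, which has codimension one, so it is the
maximal ideal; hence `(a)` has radical `m_V`, and `V/(a)` is a local ring whose maximal ideal is
nil. Such a ring is Henselian: it is complete for the nilpotent ideal generated by `f(a₀)`.
The completion `V̂` is complete for `a V̂`, hence Henselian along it, and `V̂ / a V̂ ≅ V/(a)`.
A simple root modulo the maximal ideal of `V̂` therefore lifts first to a root in `V/(a)` and then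
to a root in `V̂`.
-/

open IsLocalRing Polynomial

theorem IsAdicComplete.of_pow_eq_bot {R M : Type*} [CommRing R] [AddCommGroup M] [Module R M]
    {I : Ideal R} {N : ℕ} (hN : I ^ N = ⊥) : IsAdicComplete I M where
  haus' x hx := by simpa [hN, SModEq.zero] using hx N
  prec' f hf := by
    refine ⟨f N, fun n => ?_⟩
    rcases le_total n N with h | h
    · exact hf h
    · have : f N = f n := by simpa [hN, SModEq.sub_mem, sub_eq_zero] using hf h
      rw [this]

theorem HenselianLocalRing.of_forall_isNilpotent {R : Type*} [CommRing R] [IsLocalRing R]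
    (h : ∀ x ∈ maximalIdeal R, IsNilpotent x) : HenselianLocalRing R where
  is_henselian f hf a₀ h₁ h₂ := by
    obtain ⟨N, hN⟩ := h _ h₁
    have : IsAdicComplete (Ideal.span {f.eval a₀}) R :=
      .of_pow_eq_bot (N := N) (by simp [Ideal.span_singleton_pow, hN])
    obtain ⟨a, ha, haa₀⟩ := HenselianRing.is_henselian f hf a₀
      (Ideal.mem_span_singleton_self _) (h₂.map _)
    exact ⟨a, ha, (Ideal.span_singleton_le_iff_mem _).mpr h₁ haa₀⟩

theorem HenselianLocalRing.quotient_of_radical_eq_maximalIdeal {R : Type*} [CommRing R]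
    [IsLocalRing R] {I : Ideal R} (hI : I.radical = maximalIdeal R) :
    HenselianLocalRing (R ⧸ I) := by
  have : Nontrivial (R ⧸ I) := Ideal.Quotient.nontrivial_iff.mpr
    (ne_top_of_le_ne_top (maximalIdeal.isMaximal R).ne_top (hI ▸ I.le_radical))
  have : IsLocalRing (R ⧸ I) := .of_surjective' _ Ideal.Quotient.mk_surjective
  have : IsLocalHom (Ideal.Quotient.mk I) := .of_surjective _ Ideal.Quotient.mk_surjective
  refine of_forall_isNilpotent fun x hx => ?_
  obtain ⟨v, rfl⟩ := Ideal.Quotient.mk_surjective x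
  obtain ⟨k, hk⟩ : v ∈ I.radical := by
    rw [hI, ← maximalIdeal_comap (Ideal.Quotient.mk I)]
    exact hx
  exact ⟨k, by rw [← map_pow, Ideal.Quotient.eq_zero_iff_mem]; exact hk⟩

theorem isLocalHom_of_surjective_of_ker_le_jacobson {R S : Type*} [CommRing R] [CommRing S]
    (φ : R →+* S) (hφ : Function.Surjective φ) (h : RingHom.ker φ ≤ (⊥ : Ideal R).jacobson) :
    IsLocalHom φ := by
  have : IsLocalHom (Ideal.Quotient.mk (RingHom.ker φ)) := isLocalHom_of_le_jacobson_bot _ h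
  exact RingHom.isLocalHom_comp (RingHom.quotientKerEquivOfSurjective hφ : _ →+* S)
    (Ideal.Quotient.mk (RingHom.ker φ))

theorem HenselianLocalRing.of_surjective {R S : Type*} [CommRing R] [CommRing S]
    [HenselianLocalRing S] (φ : R →+* S) (hφ : Function.Surjective φ)
    [HenselianRing R (RingHom.ker φ)] : HenselianLocalRing R := by
  have : IsLocalHom φ := isLocalHom_of_surjective_of_ker_le_jacobson φ hφ HenselianRing.jac
  have : IsLocalRing R := φ.domain_isLocalRing
  have hker : RingHom.ker φ ≤ maximalIdeal R := by
    rw [← maximalIdeal_comap φ]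
    exact Ideal.comap_mono bot_le
  refine ⟨fun f hf a₀ h₁ h₂ => ?_⟩
  obtain ⟨b', hb', hb'a₀⟩ := HenselianLocalRing.is_henselian (f.map φ) (hf.map φ) (φ a₀)
    (by simpa using map_nonunit φ _ h₁) (by simpa [derivative_map] using h₂.map φ)
  obtain ⟨b, rfl⟩ := hφ b'
  have hba₀ : b - a₀ ∈ maximalIdeal R := by
    rw [← maximalIdeal_comap φ]
    simpa using hb'a₀
  have hb : IsUnit (f.derivative.eval b) := by
    have hd : f.derivative.eval b - f.derivative.eval a₀ ∈ maximalIdeal R :=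
      Ideal.mem_of_dvd _ (sub_dvd_eval_sub _ _ _) hba₀
    refine notMem_maximalIdeal.mp fun hm => notMem_maximalIdeal.mpr h₂ ?_
    simpa using sub_mem hm hd
  obtain ⟨c, hc, hcb⟩ := HenselianRing.is_henselian f hf b
    (RingHom.mem_ker.mpr (by simpa using hb')) (hb.map _)
  exact ⟨c, hc, by simpa using add_mem (hker hcb) hba₀⟩

theorem IsLocalRing.eq_maximalIdeal_of_lt_of_ringKrullDim_le {R : Type*} [CommRing R]
    [IsLocalRing R] {p q : Ideal R} [p.IsPrime] [q.IsPrime] {k : ℕ} (hp : p.height = k)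
    (hR : ringKrullDim R ≤ k + 1) (hpq : p < q) : q = maximalIdeal R := by
  by_contra hne
  have hqm : q < maximalIdeal R := lt_of_le_of_ne (le_maximalIdeal Ideal.IsPrime.ne_top') hne
  have hm : (maximalIdeal R).height ≤ k + 1 := by
    rw [← WithBot.coe_le_coe, maximalIdeal_height_eq_ringKrullDim]
    exact hR
  have := ((add_le_add_left (Ideal.height_add_one_le_of_lt_of_isPrime hpq) 1).trans
    (Ideal.height_add_one_le_of_lt_of_isPrime hqm)).trans hm
  rw [hp] at this
  norm_cast at this
  omega

theorem PreValuationRing.radical_span_singleton_eq_maximalIdeal {V : Type*} [CommRing V]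
    [Nontrivial V] [PreValuationRing V] {p : Ideal V} [p.IsPrime] {k : ℕ} (hp : p.height = k)
    (hV : ringKrullDim V ≤ k + 1) {a : V} (ham : a ∈ maximalIdeal V) (hap : a ∉ p) :
    (Ideal.span {a}).radical = maximalIdeal V := by
  refine le_antisymm ((Ideal.IsPrime.radical_le_iff (maximalIdeal.isMaximal V).isPrime).mpr
    ((Ideal.span_singleton_le_iff_mem _).mpr ham)) fun x hx => ?_
  rw [Ideal.radical_eq_sInf, Submodule.mem_sInf]
  rintro q ⟨hspan, hq⟩
  have haq : a ∈ q := (Ideal.span_singleton_le_iff_mem _).mp hspan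
  -- the primes of a valuation ring form a chain, so `a ∈ q \ p` forces `p < q`
  have hpq : p < q := (total_of (· ≤ ·) p q).resolve_right (fun hqp => hap (hqp haq))
    |>.lt_of_ne (fun h => hap (h ▸ haq))
  rwa [eq_maximalIdeal_of_lt_of_ringKrullDim_le hp hV hpq]

theorem stmt10_general (V : Type*) [CommRing V] [IsDomain V] [ValuationRing V]
    (n : ℕ) (hV : ringKrullDim V = n)
    (p : Ideal V) [p.IsPrime]
    (hp : ringKrullDim (Localization.AtPrime p) = (n - 1 : ℕ))
    (a : V) (ham : a ∈ IsLocalRing.maximalIdeal V) (hap : a ∉ p) :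
    HenselianLocalRing (AdicCompletion (Ideal.span {a}) V) := by
  have hpht : p.height = (n - 1 : ℕ) := by
    rw [IsLocalization.AtPrime.ringKrullDim_eq_height p] at hp
    exact WithBot.coe_injective hp
  have hdim : ringKrullDim V ≤ (n - 1 : ℕ) + 1 := by
    rw [hV]
    exact_mod_cast (by omega : n ≤ n - 1 + 1)
  have : HenselianLocalRing (V ⧸ Ideal.span {a}) :=
    .quotient_of_radical_eq_maximalIdeal
      (PreValuationRing.radical_span_singleton_eq_maximalIdeal hpht hdim ham hap)
  have hfg : (Ideal.span {a}).FG := Submodule.fg_span_singleton a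
  have : IsAdicComplete _ (AdicCompletion (Ideal.span {a}) V) :=
    AdicCompletion.isAdicComplete_self _ hfg
  have : HenselianRing _ (RingHom.ker (AdicCompletion.evalOneₐ (Ideal.span {a})).toRingHom) := by
    rw [AdicCompletion.ker_evalOneₐ_eq_map _ hfg]
    infer_instance
  exact .of_surjective _ (AdicCompletion.evalOneₐ_surjective _)

/-- For a valuation ring `V` of finite Krull dimension `n ≥ 1`, the prime `p ⊆ V` of height
`n − 1` (height is encoded as the Krull dimension of `V_p`), and an element `a ∈ m_V \ p`,
the `a`-adic completion `AdicCompletion (Ideal.span {a}) V` is a Henselian local ring. -/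
theorem stmt10 (V : Type*) [CommRing V] [IsDomain V] [ValuationRing V]
    (n : ℕ) (hn : 1 ≤ n) (hV : ringKrullDim V = n)
    (p : Ideal V) [p.IsPrime]
    (hp : ringKrullDim (Localization.AtPrime p) = (n - 1 : ℕ))
    (a : V) (ham : a ∈ IsLocalRing.maximalIdeal V) (hap : a ∉ p) :
    HenselianLocalRing (AdicCompletion (Ideal.span {a}) V) :=
  stmt10_general V n hV p hp a ham hap
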